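/- arXiv:0711.1070 — 9 statements merged into one kernel-verified Lean document; each statement's English description precedes it below -/
import Mathlib

section
/- Let X be a real inner product space, and let x, v ∈ X with ‖v‖ = ‖x‖ and ⟨x, v⟩ ≥ 0, v ≠ 0. Let P be the orthogonal projection onto the span of v, i.e., P y = (⟨y,v⟩/⟨v,v⟩) v. Then (1/√2)·‖x − v‖ ≤ ‖x − P x‖ ≤ ‖x − v‖. -/
open scoped RealInnerProductSpace

theorem stmt0 {X : Type*} [NormedAddCommGroup X] [InnerProductSpace ℝ X]
    (x v : X) (hnorm : ‖v‖ = ‖x‖) (hip : 0 ≤ ⟪x, v⟫) (hv : v ≠ 0) :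
    (1 / Real.sqrt 2) * ‖x - v‖ ≤ ‖x - (⟪x, v⟫ / ⟪v, v⟫) • v‖ ∧
      ‖x - (⟪x, v⟫ / ⟪v, v⟫) • v‖ ≤ ‖x - v‖ := by
  have hvpos : (0:ℝ) < ‖v‖ := norm_pos_iff.mpr hv
  set c := ⟪x, v⟫ with hc
  have hvv : ⟪v, v⟫ = ‖v‖ ^ 2 := real_inner_self_eq_norm_sq v
  have hb : ‖x - v‖ ^ 2 = ‖x‖ ^ 2 - 2 * c + ‖v‖ ^ 2 := norm_sub_sq_real x v
  have ha : ‖x - (c / ⟪v, v⟫) • v‖ ^ 2 = ‖x‖ ^ 2 - c ^ 2 / ‖v‖ ^ 2 := by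
    rw [norm_sub_sq_real, real_inner_smul_right, norm_smul, hvv, mul_pow, ← hc]
    rw [Real.norm_eq_abs, sq_abs]
    field_simp
    ring
  have hcs : c ≤ ‖x‖ * ‖v‖ := real_inner_le_norm x v
  have hn2 : (0:ℝ) < ‖v‖ ^ 2 := by positivity
  -- squared inequalities
  have h1 : ‖x - (c / ⟪v, v⟫) • v‖ ^ 2 ≤ ‖x - v‖ ^ 2 := by
    rw [ha, hb, ← hnorm]
    have hd : c ^ 2 / ‖v‖ ^ 2 * ‖v‖ ^ 2 = c ^ 2 := div_mul_cancel₀ _ (ne_of_gt hn2)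
    nlinarith [sq_nonneg (‖v‖ ^ 2 - c), div_nonneg (sq_nonneg c) hn2.le]
  have h2 : (1/2) * ‖x - v‖ ^ 2 ≤ ‖x - (c / ⟪v, v⟫) • v‖ ^ 2 := by
    rw [ha, hb, ← hnorm]
    have hd : c ^ 2 / ‖v‖ ^ 2 * ‖v‖ ^ 2 = c ^ 2 := div_mul_cancel₀ _ (ne_of_gt hn2)
    have hcv : c ≤ ‖v‖ ^ 2 := by nlinarith
    nlinarith [mul_nonneg hip (sub_nonneg.mpr hcv), div_nonneg (sq_nonneg c) hn2.le]
  have hA : (0:ℝ) ≤ ‖x - (c / ⟪v, v⟫) • v‖ := norm_nonneg _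
  have hB : (0:ℝ) ≤ ‖x - v‖ := norm_nonneg _
  constructor
  · have hs : Real.sqrt 2 > 0 := by positivity
    have : ((1 / Real.sqrt 2) * ‖x - v‖) ^ 2 ≤ ‖x - (c / ⟪v, v⟫) • v‖ ^ 2 := by
      have : ((1 / Real.sqrt 2) * ‖x - v‖) ^ 2 = (1/2) * ‖x - v‖ ^ 2 := by
        rw [mul_pow, div_pow, one_pow, Real.sq_sqrt (by norm_num : (2:ℝ) ≥ 0)]
      linarith [h2]
    exact (pow_le_pow_iff_left₀ (by positivity) hA two_ne_zero).mp this
  · exact (pow_le_pow_iff_left₀ hA hB two_ne_zero).mp h1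
end

section
/- Let H be a real Hilbert space with two inner products ⟨·,·⟩₁ and ⟨·,·⟩₂ inducing equivalent norms. Let G : H → H be a bounded linear operator symmetric with respect to ⟨·,·⟩₂, and let u ∈ H with G u = 0, u ≠ 0. If there exists c > 0 such that ⟨G x, x⟩₂ ≥ c ⟨x, x⟩₂ for all x with ⟨x, u⟩₁ = 0, then there exists c' > 0 such that ⟨G x, x⟩₂ ≥ c' ⟨x, x⟩₂ for all x with ⟨x, u⟩₂ = 0. -/
/-
Take `c' = c`. For `x` with `⟨x, u⟩₂ = 0`, let `y = x - t u` be its component along the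
first-inner-product orthogonal complement of `u`. Since `G u = 0` and `G` is `⟨·,·⟩₂`-symmetric,
`⟨G y, y⟩₂ = ⟨G x, x⟩₂`, while Pythagoras gives `⟨y, y⟩₂ = ⟨x, x⟩₂ + t² ⟨u, u⟩₂ ≥ ⟨x, x⟩₂`.
Hence `c ⟨x, x⟩₂ ≤ c ⟨y, y⟩₂ ≤ ⟨G y, y⟩₂ = ⟨G x, x⟩₂`.
-/

section BilinearForm

variable {R H : Type*} [AddCommGroup H]

theorem apply_sub_div_smul_self_eq_zero [Field R] [Module R H] (B : H →ₗ[R] H →ₗ[R] R)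
    {u : H} (hu : B u u ≠ 0) (x : H) : B (x - (B x u / B u u) • u) u = 0 := by
  simp only [map_sub, map_smul, LinearMap.sub_apply, LinearMap.smul_apply, smul_eq_mul,
    div_mul_cancel₀ _ hu, sub_self]

theorem apply_self_le_apply_sub_smul_self [CommRing R] [LinearOrder R] [IsStrictOrderedRing R]
    [Module R H] (B : H →ₗ[R] H →ₗ[R] R) (hB : ∀ x y, B x y = B y x) {x u : H}
    (hxu : B x u = 0) (hu : 0 ≤ B u u) (t : R) : B x x ≤ B (x - t • u) (x - t • u) := by
  have hux : B u x = 0 := hB u x ▸ hxu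
  simp only [map_sub, map_smul, LinearMap.sub_apply, LinearMap.smul_apply, smul_eq_mul, hxu,
    hux]
  nlinarith [mul_nonneg (mul_self_nonneg t) hu]

theorem apply_map_sub_smul_of_map_eq_zero [CommRing R] [Module R H] {F : Type*} [FunLike F H H]
    [LinearMapClass F R H H] (B : H →ₗ[R] H →ₗ[R] R) {G : F}
    (hG : ∀ x y, B (G x) y = B x (G y)) {u : H} (hGu : G u = 0) (x : H) (t : R) :
    B (G (x - t • u)) (x - t • u) = B (G x) x := by
  have hGxu : B (G x) u = 0 := by rw [hG, hGu, map_zero]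
  simp only [map_sub, map_smul, hGu, smul_zero, sub_zero, smul_eq_mul, hGxu, mul_zero]

end BilinearForm

theorem stmt1_general {H : Type*} [NormedAddCommGroup H] [InnerProductSpace ℝ H]
    (ip1 ip2 : H →ₗ[ℝ] H →ₗ[ℝ] ℝ)
    (h2symm : ∀ x y, ip2 x y = ip2 y x)
    (h1pos : ∀ x, x ≠ 0 → 0 < ip1 x x) (h2pos : ∀ x, x ≠ 0 → 0 < ip2 x x)
    (G : H →L[ℝ] H) (hGsymm : ∀ x y, ip2 (G x) y = ip2 x (G y))
    (u : H) (hu : u ≠ 0) (hGu : G u = 0)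
    (c : ℝ) (hc : 0 < c) (hell : ∀ x, ip1 x u = 0 → c * ip2 x x ≤ ip2 (G x) x) :
    ∃ c' : ℝ, 0 < c' ∧ ∀ x, ip2 x u = 0 → c' * ip2 x x ≤ ip2 (G x) x := by
  refine ⟨c, hc, fun x hxu => ?_⟩
  set t := ip1 x u / ip1 u u
  have hy : ip1 (x - t • u) u = 0 := apply_sub_div_smul_self_eq_zero ip1 (h1pos u hu).ne' x
  have hxy : ip2 x x ≤ ip2 (x - t • u) (x - t • u) :=
    apply_self_le_apply_sub_smul_self ip2 h2symm hxu (h2pos u hu).le t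
  calc c * ip2 x x ≤ c * ip2 (x - t • u) (x - t • u) := mul_le_mul_of_nonneg_left hxy hc.le
    _ ≤ ip2 (G (x - t • u)) (x - t • u) := hell _ hy
    _ = ip2 (G x) x := apply_map_sub_smul_of_map_eq_zero ip2 hGsymm hGu x t

/-- A Hilbert space with two equivalent inner products; an operator `G`
symmetric w.r.t. the second inner product, vanishing on `u`, and elliptic (w.r.t. the
second inner product) on the first-inner-product orthogonal complement of `u`, is also
elliptic on the second-inner-product orthogonal complement of `u`. -/
theorem stmt1 {H : Type*} [NormedAddCommGroup H] [InnerProductSpace ℝ H] [CompleteSpace H]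
    (ip1 ip2 : H →ₗ[ℝ] H →ₗ[ℝ] ℝ)
    (h1symm : ∀ x y, ip1 x y = ip1 y x) (h2symm : ∀ x y, ip2 x y = ip2 y x)
    (h1pos : ∀ x, x ≠ 0 → 0 < ip1 x x) (h2pos : ∀ x, x ≠ 0 → 0 < ip2 x x)
    (m M : ℝ) (hm : 0 < m) (hM : 0 < M)
    (hequiv : ∀ x, m * Real.sqrt (ip1 x x) ≤ Real.sqrt (ip2 x x) ∧
      Real.sqrt (ip2 x x) ≤ M * Real.sqrt (ip1 x x))
    (G : H →L[ℝ] H) (hGsymm : ∀ x y, ip2 (G x) y = ip2 x (G y))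
    (u : H) (hu : u ≠ 0) (hGu : G u = 0)
    (c : ℝ) (hc : 0 < c) (hell : ∀ x, ip1 x u = 0 → c * ip2 x x ≤ ip2 (G x) x) :
    ∃ c' : ℝ, 0 < c' ∧ ∀ x, ip2 x u = 0 → c' * ip2 x x ≤ ip2 (G x) x :=
  stmt1_general ip1 ip2 h2symm h1pos h2pos G hGsymm u hu hGu c hc hell
end

section
/- Let A, C be bounded symmetric positive linear operators on a real Hilbert space H (e.g. ℓ²) with γ‖x‖² ≤ ⟨A x, x⟩ ≤ Γ‖x‖² for all x. Suppose u ≠ 0 satisfies A u = λ̲ C u where λ̲ = min_x ⟨A x, x⟩/⟨C x, x⟩ > 0, and suppose there is Λ > λ̲ such that ⟨A x, x⟩/⟨C x, x⟩ ≥ Λ for all x ≠ 0 with ⟨A u, x⟩ = 0. Then the operator M := A − λ̲ C satisfies ⟨M x, x⟩ ≥ ((Λ − λ̲)/Λ)·γ·‖x‖² for all x with ⟨A x, u⟩ = 0, and 0 < ⟨M x, x⟩ ≤ Γ‖x‖² for all x not in the span of u. -/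
open scoped RealInnerProductSpace

/-!
Write `M = A - λ̲ C`. A Rayleigh-quotient bound `Λ ⟪C x, x⟫ ≤ ⟪A x, x⟫` on the `A`-orthogonal
complement of `u` gives `⟪M x, x⟫ ≥ (Λ - λ̲) ⟪C x, x⟫ ≥ ((Λ - λ̲)/Λ) ⟪A x, x⟫` there. Since `M` is
symmetric and `M u = 0`, the quadratic form of `M` is unchanged by adding multiples of `u`, so for
`x ∉ span {u}` it equals its value at the nonzero `A`-orthogonal projection
`x - (⟪A u, x⟫ / ⟪A u, u⟫) u`, where it is positive.
-/

section

variable {H : Type*} [NormedAddCommGroup H] [InnerProductSpace ℝ H]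

theorem LinearMap.IsSymmetric.inner_map_sub_smul_of_map_eq_zero {T : H →ₗ[ℝ] H}
    (hT : T.IsSymmetric) {u : H} (hu : T u = 0) (x : H) (t : ℝ) :
    ⟪T (x - t • u), x - t • u⟫ = ⟪T x, x⟫ := by
  have hxu : ⟪T x, u⟫ = 0 := by rw [hT, hu, inner_zero_right]
  rw [map_sub, map_smul, hu, smul_zero, sub_zero, inner_sub_right, real_inner_smul_right, hxu,
    mul_zero, sub_zero]

theorem inner_sub_div_smul_eq_zero {v u : H} (hvu : ⟪v, u⟫ ≠ 0) (x : H) :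
    ⟪v, x - (⟪v, x⟫ / ⟪v, u⟫) • u⟫ = 0 := by
  rw [inner_sub_right, real_inner_smul_right, div_mul_cancel₀ _ hvu, sub_self]

theorem sub_smul_ne_zero_of_notMem_span_singleton {u x : H} (hx : x ∉ Submodule.span ℝ {u})
    (t : ℝ) : x - t • u ≠ 0 := by
  rw [sub_ne_zero]
  rintro rfl
  exact hx (Submodule.smul_mem _ t (Submodule.mem_span_singleton_self u))

theorem mul_inner_le_of_le_inner_div {T S : H →L[ℝ] H} {Λ : ℝ} {x : H}
    (hS : x ≠ 0 → 0 < ⟪S x, x⟫) (h : x ≠ 0 → Λ ≤ ⟪T x, x⟫ / ⟪S x, x⟫) :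
    Λ * ⟪S x, x⟫ ≤ ⟪T x, x⟫ := by
  rcases eq_or_ne x 0 with rfl | hx
  · simp
  · exact (le_div_iff₀ (hS hx)).1 (h hx)

theorem inner_sub_smul_left (T S : H →L[ℝ] H) (c : ℝ) (x : H) :
    ⟪T x - c • S x, x⟫ = ⟪T x, x⟫ - c * ⟪S x, x⟫ := by
  rw [inner_sub_left, real_inner_smul_left]

end

theorem sub_div_mul_le_sub_mul {a c lam Λ : ℝ} (hlam : 0 ≤ lam) (hΛ : 0 < Λ) (h : Λ * c ≤ a) :
    (Λ - lam) / Λ * a ≤ a - lam * c := by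
  have key : a - lam * c - (Λ - lam) / Λ * a = lam / Λ * (a - Λ * c) := by
    field_simp
    ring
  have : 0 ≤ lam / Λ * (a - Λ * c) := mul_nonneg (div_nonneg hlam hΛ.le) (sub_nonneg.2 h)
  linarith

theorem stmt2_general {H : Type*} [NormedAddCommGroup H] [InnerProductSpace ℝ H]
    (A C : H →L[ℝ] H)
    (hAsymm : ∀ x y, ⟪A x, y⟫ = ⟪x, A y⟫) (hCsymm : ∀ x y, ⟪C x, y⟫ = ⟪x, C y⟫)
    (hCpos : ∀ x, x ≠ 0 → 0 < ⟪C x, x⟫)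
    (γ Γ : ℝ)
    (hA : ∀ x, γ * ‖x‖ ^ 2 ≤ ⟪A x, x⟫ ∧ ⟪A x, x⟫ ≤ Γ * ‖x‖ ^ 2)
    (lam : ℝ) (hlam : 0 < lam) (u : H) (hu : u ≠ 0) (heig : A u = lam • C u)
    (Λ : ℝ) (hΛ : lam < Λ)
    (hgap : ∀ x, x ≠ 0 → ⟪A u, x⟫ = 0 → Λ ≤ ⟪A x, x⟫ / ⟪C x, x⟫) :
    (∀ x, ⟪A x, u⟫ = 0 → ((Λ - lam) / Λ) * γ * ‖x‖ ^ 2 ≤ ⟪A x - lam • C x, x⟫) ∧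
      (∀ x, x ∉ Submodule.span ℝ ({u} : Set H) →
        0 < ⟪A x - lam • C x, x⟫ ∧ ⟪A x - lam • C x, x⟫ ≤ Γ * ‖x‖ ^ 2) := by
  have gap : ∀ x, ⟪A u, x⟫ = 0 → Λ * ⟪C x, x⟫ ≤ ⟪A x, x⟫ := fun x hx =>
    mul_inner_le_of_le_inner_div (hCpos x) (hgap x · hx)
  refine ⟨fun x hx => ?_, fun x hx => ⟨?_, ?_⟩⟩
  · have hΛ0 : 0 < Λ := hlam.trans hΛ
    calc (Λ - lam) / Λ * γ * ‖x‖ ^ 2 ≤ (Λ - lam) / Λ * ⟪A x, x⟫ := by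
          rw [mul_assoc]
          exact mul_le_mul_of_nonneg_left (hA x).1 (div_nonneg (sub_pos.2 hΛ).le hΛ0.le)
      _ ≤ ⟪A x, x⟫ - lam * ⟪C x, x⟫ :=
          sub_div_mul_le_sub_mul hlam.le hΛ0 (gap x (by rw [hAsymm, real_inner_comm, hx]))
      _ = ⟪A x - lam • C x, x⟫ := (inner_sub_smul_left A C lam x).symm
  · have hAuu : ⟪A u, u⟫ ≠ 0 := by
      rw [heig, real_inner_smul_left]
      exact (mul_pos hlam (hCpos u hu)).ne'
    have hM : ((A - lam • C : H →L[ℝ] H) : H →ₗ[ℝ] H).IsSymmetric :=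
      LinearMap.IsSymmetric.sub hAsymm (LinearMap.IsSymmetric.smul (conj_trivial lam) hCsymm)
    have hMu : (A - lam • C) u = 0 := by simp [heig]
    set w := x - (⟪A u, x⟫ / ⟪A u, u⟫) • u
    have hw : w ≠ 0 := sub_smul_ne_zero_of_notMem_span_singleton hx _
    calc (0 : ℝ) < (Λ - lam) * ⟪C w, w⟫ := mul_pos (sub_pos.2 hΛ) (hCpos w hw)
      _ ≤ ⟪A w - lam • C w, w⟫ := by
          rw [inner_sub_smul_left]
          linarith [gap w (inner_sub_div_smul_eq_zero hAuu x)]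
      _ = ⟪A x - lam • C x, x⟫ := hM.inner_map_sub_smul_of_map_eq_zero hMu x _
  · have hx0 : x ≠ 0 := fun h => hx (h ▸ Submodule.zero_mem _)
    calc ⟪A x - lam • C x, x⟫ = ⟪A x, x⟫ - lam * ⟪C x, x⟫ := inner_sub_smul_left A C lam x
      _ ≤ ⟪A x, x⟫ := sub_le_self _ (mul_nonneg hlam.le (hCpos x hx0).le)
      _ ≤ Γ * ‖x‖ ^ 2 := (hA x).2

/-- In the generalized eigenproblem setting, `M = A - λ̲ C` satisfies
`⟨M x, x⟩ ≥ ((Λ - λ̲)/Λ)·γ·‖x‖²` for all `x` with `⟨A x, u⟩ = 0`, and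
`0 < ⟨M x, x⟩ ≤ Γ‖x‖²` for all `x` not in the span of `u`. -/
theorem stmt2 {H : Type*} [NormedAddCommGroup H] [InnerProductSpace ℝ H] [CompleteSpace H]
    (A C : H →L[ℝ] H)
    (hAsymm : ∀ x y, ⟪A x, y⟫ = ⟪x, A y⟫) (hCsymm : ∀ x y, ⟪C x, y⟫ = ⟪x, C y⟫)
    (hCpos : ∀ x, x ≠ 0 → 0 < ⟪C x, x⟫)
    (γ Γ : ℝ) (hγ : 0 < γ)
    (hA : ∀ x, γ * ‖x‖ ^ 2 ≤ ⟪A x, x⟫ ∧ ⟪A x, x⟫ ≤ Γ * ‖x‖ ^ 2)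
    (lam : ℝ) (hlam : 0 < lam) (u : H) (hu : u ≠ 0) (heig : A u = lam • C u)
    (hmin : ∀ x, x ≠ 0 → lam ≤ ⟪A x, x⟫ / ⟪C x, x⟫)
    (Λ : ℝ) (hΛ : lam < Λ)
    (hgap : ∀ x, x ≠ 0 → ⟪A u, x⟫ = 0 → Λ ≤ ⟪A x, x⟫ / ⟪C x, x⟫) :
    (∀ x, ⟪A x, u⟫ = 0 → ((Λ - lam) / Λ) * γ * ‖x‖ ^ 2 ≤ ⟪A x - lam • C x, x⟫) ∧
      (∀ x, x ∉ Submodule.span ℝ ({u} : Set H) →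
        0 < ⟪A x - lam • C x, x⟫ ∧ ⟪A x - lam • C x, x⟫ ≤ Γ * ‖x‖ ^ 2) :=
  stmt2_general A C hAsymm hCsymm hCpos γ Γ hA lam hlam u hu heig Λ hΛ hgap
end

section
/- Under the assumptions of the previous context, M := A − λ̲ C is elliptic on V₀ := {x ∈ H : ⟨x, u⟩ = 0}: there exist θ, Θ > 0 such that θ‖x‖² ≤ ⟨M x, x⟩ ≤ Θ‖x‖² for all x ∈ V₀. -/
/-!
Since `M = A - λ C` is symmetric and kills `u`, the form `⟪M x, x⟫` does not change when `x` is
moved along `u`. Moving `x ⊥ u` to its `A`-orthogonal component `w = x - α u`, the spectral gap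
gives `⟪M w, w⟫ ≥ (1 - λ/Λ) ⟪A w, w⟫ ≥ (1 - λ/Λ) γ ‖w‖²`, and `‖x‖ ≤ ‖w‖` because `x` is the
orthogonal projection of `w` onto `uᗮ`. The upper bound is `⟪M x, x⟫ ≤ ⟪A x, x⟫ ≤ Γ ‖x‖²`,
as `C ≥ 0`.
-/

open scoped RealInnerProductSpace

section SpectralGap

variable {H : Type*} [NormedAddCommGroup H] [InnerProductSpace ℝ H]

theorem LinearMap.IsSymmetric.inner_map_add_smul_self_of_map_eq_zero {M : H →ₗ[ℝ] H}
    (hM : M.IsSymmetric) {u : H} (hu : M u = 0) (w : H) (a : ℝ) :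
    ⟪M (w + a • u), w + a • u⟫ = ⟪M w, w⟫ := by
  have hwu : ⟪M w, u⟫ = 0 := by rw [hM, hu, inner_zero_right]
  simp [hu, inner_add_right, real_inner_smul_right, hwu]

theorem real_inner_sub_div_smul_eq_zero (v x u : H) (h : ⟪v, u⟫ ≠ 0) :
    ⟪v, x - (⟪v, x⟫ / ⟪v, u⟫) • u⟫ = 0 := by
  rw [inner_sub_right, real_inner_smul_right, div_mul_cancel₀ _ h, sub_self]

theorem sq_norm_le_sq_norm_sub_of_inner_eq_zero {x y : H} (h : ⟪x, y⟫ = 0) :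
    ‖x‖ ^ 2 ≤ ‖x - y‖ ^ 2 := by
  have := norm_sub_sq_eq_norm_sq_add_norm_sq_real h
  nlinarith [mul_self_nonneg ‖y‖]

theorem inner_sub_smul_le_mul_sq_norm (A C : H →L[ℝ] H) (hC : ∀ x, 0 ≤ ⟪C x, x⟫) {Γ : ℝ}
    (hA : ∀ x, ⟪A x, x⟫ ≤ Γ * ‖x‖ ^ 2) {lam : ℝ} (hlam : 0 ≤ lam) (x : H) :
    ⟪A x - lam • C x, x⟫ ≤ Γ * ‖x‖ ^ 2 := by
  rw [inner_sub_left, real_inner_smul_left]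
  nlinarith [hA x, hC x]

theorem mul_inner_le_inner_sub_of_spectral_gap (A C : H →L[ℝ] H)
    (hCpos : ∀ x, x ≠ 0 → 0 < ⟪C x, x⟫) {lam Λ : ℝ} (hlam : 0 ≤ lam) (hΛ : 0 < Λ) {w : H}
    (hgap : w ≠ 0 → Λ ≤ ⟪A w, w⟫ / ⟪C w, w⟫) :
    (1 - lam / Λ) * ⟪A w, w⟫ ≤ ⟪A w - lam • C w, w⟫ := by
  rcases eq_or_ne w 0 with rfl | hw
  · simp
  have hCw := hCpos w hw
  have hΛC : Λ * ⟪C w, w⟫ ≤ ⟪A w, w⟫ := (le_div_iff₀ hCw).mp (hgap hw)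
  have hlamC : lam * ⟪C w, w⟫ ≤ lam / Λ * ⟪A w, w⟫ := by
    rw [div_mul_eq_mul_div, le_div_iff₀ hΛ]
    nlinarith
  rw [inner_sub_left, real_inner_smul_left]
  linarith

theorem mul_sq_norm_le_inner_sub_smul_of_spectral_gap (A C : H →L[ℝ] H)
    (hAsymm : ∀ x y, ⟪A x, y⟫ = ⟪x, A y⟫) (hCsymm : ∀ x y, ⟪C x, y⟫ = ⟪x, C y⟫)
    (hCpos : ∀ x, x ≠ 0 → 0 < ⟪C x, x⟫) {γ : ℝ} (hγ : 0 ≤ γ) (hA : ∀ x, γ * ‖x‖ ^ 2 ≤ ⟪A x, x⟫)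
    {lam Λ : ℝ} (hlam : 0 < lam) (hΛ : lam < Λ) {u : H} (hu : u ≠ 0) (heig : A u = lam • C u)
    (hgap : ∀ x, x ≠ 0 → ⟪A u, x⟫ = 0 → Λ ≤ ⟪A x, x⟫ / ⟪C x, x⟫) {x : H} (hxu : ⟪x, u⟫ = 0) :
    γ * (1 - lam / Λ) * ‖x‖ ^ 2 ≤ ⟪A x - lam • C x, x⟫ := by
  set M : H →ₗ[ℝ] H := (A : H →ₗ[ℝ] H) - lam • (C : H →ₗ[ℝ] H)
  have hM : M.IsSymmetric := LinearMap.IsSymmetric.sub hAsymm (.smul (conj_trivial lam) hCsymm)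
  have hMu : M u = 0 := by simp [M, heig]
  have hAuu : ⟪A u, u⟫ ≠ 0 := by
    rw [heig, real_inner_smul_left]
    exact mul_ne_zero hlam.ne' (hCpos u hu).ne'
  set α := ⟪A u, x⟫ / ⟪A u, u⟫
  set w := x - α • u
  have hAuw : ⟪A u, w⟫ = 0 := real_inner_sub_div_smul_eq_zero _ _ _ hAuu
  have hMxw : ⟪M x, x⟫ = ⟪M w, w⟫ := by
    simpa [w] using hM.inner_map_add_smul_self_of_map_eq_zero hMu w α
  have hxw : ‖x‖ ^ 2 ≤ ‖w‖ ^ 2 :=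
    sq_norm_le_sq_norm_sub_of_inner_eq_zero (by rw [real_inner_smul_right, hxu, mul_zero])
  have hcoef : 0 ≤ 1 - lam / Λ := by
    rw [sub_nonneg, div_le_one (hlam.trans hΛ)]
    exact hΛ.le
  calc γ * (1 - lam / Λ) * ‖x‖ ^ 2 = (1 - lam / Λ) * (γ * ‖x‖ ^ 2) := by ring
    _ ≤ (1 - lam / Λ) * ⟪A w, w⟫ := by
        gcongr
        exact (mul_le_mul_of_nonneg_left hxw hγ).trans (hA w)
    _ ≤ ⟪M w, w⟫ := mul_inner_le_inner_sub_of_spectral_gap A C hCpos hlam.le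
        (hlam.trans hΛ) (fun hw ↦ hgap w hw hAuw)
    _ = ⟪A x - lam • C x, x⟫ := hMxw.symm

end SpectralGap

theorem stmt3_general {H : Type*} [NormedAddCommGroup H] [InnerProductSpace ℝ H]
    (A C : H →L[ℝ] H)
    (hAsymm : ∀ x y, ⟪A x, y⟫ = ⟪x, A y⟫) (hCsymm : ∀ x y, ⟪C x, y⟫ = ⟪x, C y⟫)
    (hCpos : ∀ x, x ≠ 0 → 0 < ⟪C x, x⟫)
    (γ Γ : ℝ) (hγ : 0 < γ)
    (hA : ∀ x, γ * ‖x‖ ^ 2 ≤ ⟪A x, x⟫ ∧ ⟪A x, x⟫ ≤ Γ * ‖x‖ ^ 2)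
    (lam : ℝ) (hlam : 0 < lam) (u : H) (hu : u ≠ 0) (heig : A u = lam • C u)
    (Λ : ℝ) (hΛ : lam < Λ)
    (hgap : ∀ x, x ≠ 0 → ⟪A u, x⟫ = 0 → Λ ≤ ⟪A x, x⟫ / ⟪C x, x⟫) :
    ∃ θ Θ : ℝ, 0 < θ ∧ 0 < Θ ∧
      ∀ x, ⟪x, u⟫ = 0 →
        θ * ‖x‖ ^ 2 ≤ ⟪A x - lam • C x, x⟫ ∧ ⟪A x - lam • C x, x⟫ ≤ Θ * ‖x‖ ^ 2 := by
  have hΓ : 0 < Γ := by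
    have hu2 : 0 < ‖u‖ ^ 2 := by positivity
    nlinarith [hA u]
  have hcoef : 0 < 1 - lam / Λ := by
    rw [sub_pos, div_lt_one (hlam.trans hΛ)]
    exact hΛ
  refine ⟨γ * (1 - lam / Λ), Γ, by positivity, hΓ, fun x hxu ↦ ⟨?_, ?_⟩⟩
  · exact mul_sq_norm_le_inner_sub_smul_of_spectral_gap A C hAsymm hCsymm hCpos hγ.le
      (fun x ↦ (hA x).1) hlam hΛ hu heig hgap hxu
  · have hC : ∀ x, 0 ≤ ⟪C x, x⟫ := fun x ↦
      (eq_or_ne x 0).elim (fun hx ↦ by simp [hx]) (fun hx ↦ (hCpos x hx).le)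
    exact inner_sub_smul_le_mul_sq_norm A C hC (fun x ↦ (hA x).2) hlam.le x

/-- `M = A - λ̲ C` is bounded and elliptic on `V₀ = {x : ⟨x, u⟩ = 0}`:
there exist `θ, Θ > 0` with `θ‖x‖² ≤ ⟨M x, x⟩ ≤ Θ‖x‖²` for all `x ∈ V₀`. -/
theorem stmt3 {H : Type*} [NormedAddCommGroup H] [InnerProductSpace ℝ H] [CompleteSpace H]
    (A C : H →L[ℝ] H)
    (hAsymm : ∀ x y, ⟪A x, y⟫ = ⟪x, A y⟫) (hCsymm : ∀ x y, ⟪C x, y⟫ = ⟪x, C y⟫)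
    (hCpos : ∀ x, x ≠ 0 → 0 < ⟪C x, x⟫)
    (γ Γ : ℝ) (hγ : 0 < γ)
    (hA : ∀ x, γ * ‖x‖ ^ 2 ≤ ⟪A x, x⟫ ∧ ⟪A x, x⟫ ≤ Γ * ‖x‖ ^ 2)
    (lam : ℝ) (hlam : 0 < lam) (u : H) (hu : u ≠ 0) (heig : A u = lam • C u)
    (hmin : ∀ x, x ≠ 0 → lam ≤ ⟪A x, x⟫ / ⟪C x, x⟫)
    (Λ : ℝ) (hΛ : lam < Λ)
    (hgap : ∀ x, x ≠ 0 → ⟪A u, x⟫ = 0 → Λ ≤ ⟪A x, x⟫ / ⟪C x, x⟫) :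
    ∃ θ Θ : ℝ, 0 < θ ∧ 0 < Θ ∧
      ∀ x, ⟪x, u⟫ = 0 →
        θ * ‖x‖ ^ 2 ≤ ⟪A x - lam • C x, x⟫ ∧ ⟪A x - lam • C x, x⟫ ≤ Θ * ‖x‖ ^ 2 :=
  stmt3_general A C hAsymm hCsymm hCpos γ Γ hγ hA lam hlam u hu heig Λ hΛ hgap
end

section
/- With A, C, u, λ̲, Λ, γ, Γ as in the generalized eigenproblem setting, for any x with ‖x‖ = 1 the Rayleigh quotient λ(x) = ⟨A x, x⟩/⟨C x, x⟩ satisfies λ(x) − λ̲ ≤ (2Γ/γ)·λ(x)·‖(I − P)x‖², where P is the orthogonal projection onto the span of the eigenvector u. -/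
open scoped RealInnerProductSpace

/-! The defect `⟪A x, x⟫ - λ̲ ⟪C x, x⟫` is the quadratic form of the symmetric operator
`A - λ̲ C`, which kills `u`; so it only sees the component `e = x - P x`, where it is at most
`⟪A e, e⟫ ≤ Γ ‖e‖²` because `λ̲ ⟪C e, e⟫ ≥ 0`. Dividing by `⟪C x, x⟫` and using
`γ ≤ ⟪A x, x⟫` for a unit vector `x` gives the bound. -/

section

variable {𝕜 H : Type*} [RCLike 𝕜] [NormedAddCommGroup H]

theorem LinearMap.IsSymmetric.inner_map_add_self_of_map_eq_zero [InnerProductSpace 𝕜 H]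
    {T : H →ₗ[𝕜] H} (hT : T.IsSymmetric) {u : H} (hu : T u = 0) (e : H) :
    inner 𝕜 (T (u + e)) (u + e) = inner 𝕜 (T e) e := by
  rw [map_add, hu, zero_add, inner_add_right, hT e u, hu, inner_zero_right, zero_add]

theorem inner_map_sub_smul_inner_map_le_of_eq_smul [InnerProductSpace ℝ H]
    {A C : H →ₗ[ℝ] H} (hA : A.IsSymmetric) (hC : C.IsSymmetric)
    (hCnonneg : ∀ y, 0 ≤ ⟪C y, y⟫) {Γ : ℝ} (hAle : ∀ y, ⟪A y, y⟫ ≤ Γ * ‖y‖ ^ 2)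
    {lam : ℝ} (hlam : 0 ≤ lam) {u : H} (heig : A u = lam • C u) (x : H) (a : ℝ) :
    ⟪A x, x⟫ - lam * ⟪C x, x⟫ ≤ Γ * ‖x - a • u‖ ^ 2 := by
  set e := x - a • u
  have hker : (A - lam • C) (a • u) = 0 := by
    simp only [LinearMap.sub_apply, LinearMap.smul_apply, map_smul, heig, sub_self, smul_zero]
  have hdefect : ⟪A x, x⟫ - lam * ⟪C x, x⟫ = ⟪A e, e⟫ - lam * ⟪C e, e⟫ := by
    have := (hA.sub (hC.smul (conj_trivial lam))).inner_map_add_self_of_map_eq_zero hker e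
    rw [add_sub_cancel] at this
    simpa only [LinearMap.sub_apply, LinearMap.smul_apply, inner_sub_left,
      real_inner_smul_left] using this
  rw [hdefect]
  nlinarith [hAle e, hCnonneg e]

end

theorem stmt6_general {H : Type*} [NormedAddCommGroup H] [InnerProductSpace ℝ H]
    (A C : H →L[ℝ] H)
    (hAsymm : ∀ y z, ⟪A y, z⟫ = ⟪y, A z⟫) (hCsymm : ∀ y z, ⟪C y, z⟫ = ⟪y, C z⟫)
    (hCpos : ∀ y, y ≠ 0 → 0 < ⟪C y, y⟫)
    (γ Γ : ℝ) (hγ : 0 < γ)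
    (hA : ∀ y, γ * ‖y‖ ^ 2 ≤ ⟪A y, y⟫ ∧ ⟪A y, y⟫ ≤ Γ * ‖y‖ ^ 2)
    (lam : ℝ) (hlam : 0 < lam) (u : H) (heig : A u = lam • C u)
    (x : H) (hx : ‖x‖ = 1) :
    ⟪A x, x⟫ / ⟪C x, x⟫ - lam ≤
      (2 * Γ / γ) * (⟪A x, x⟫ / ⟪C x, x⟫) * ‖x - (⟪x, u⟫ / ⟪u, u⟫) • u‖ ^ 2 := by
  set e := x - (⟪x, u⟫ / ⟪u, u⟫) • u
  have hCx : 0 < ⟪C x, x⟫ := hCpos x (norm_ne_zero_iff.mp (by simp [hx]))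
  have hγAx : γ ≤ ⟪A x, x⟫ := by simpa [hx] using (hA x).1
  have hAxΓ : ⟪A x, x⟫ ≤ Γ := by simpa [hx] using (hA x).2
  have hCnonneg (y : H) : 0 ≤ ⟪C y, y⟫ := by
    rcases eq_or_ne y 0 with rfl | hy
    · simp
    · exact (hCpos y hy).le
  have hdefect : ⟪A x, x⟫ - lam * ⟪C x, x⟫ ≤ Γ * ‖e‖ ^ 2 :=
    inner_map_sub_smul_inner_map_le_of_eq_smul (A := (A : H →ₗ[ℝ] H)) (C := C) hAsymm hCsymm
      hCnonneg (fun y => (hA y).2) hlam.le heig x _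
  have hΓ : Γ ≤ 2 * Γ / γ * ⟪A x, x⟫ := by
    rw [div_mul_eq_mul_div, le_div_iff₀ hγ]
    nlinarith
  calc ⟪A x, x⟫ / ⟪C x, x⟫ - lam = (⟪A x, x⟫ - lam * ⟪C x, x⟫) / ⟪C x, x⟫ := by field_simp
    _ ≤ Γ * ‖e‖ ^ 2 / ⟪C x, x⟫ := by gcongr
    _ ≤ 2 * Γ / γ * ⟪A x, x⟫ * ‖e‖ ^ 2 / ⟪C x, x⟫ := by gcongr
    _ = 2 * Γ / γ * (⟪A x, x⟫ / ⟪C x, x⟫) * ‖e‖ ^ 2 := by ring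

/-- For any unit vector `x`, the Rayleigh quotient satisfies
`λ(x) - λ̲ ≤ (2Γ/γ)·λ(x)·‖(I - P)x‖²`, with `P` the orthogonal projection onto `span u`. -/
theorem stmt6 {H : Type*} [NormedAddCommGroup H] [InnerProductSpace ℝ H] [CompleteSpace H]
    (A C : H →L[ℝ] H)
    (hAsymm : ∀ y z, ⟪A y, z⟫ = ⟪y, A z⟫) (hCsymm : ∀ y z, ⟪C y, z⟫ = ⟪y, C z⟫)
    (hCpos : ∀ y, y ≠ 0 → 0 < ⟪C y, y⟫)
    (γ Γ : ℝ) (hγ : 0 < γ)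
    (hA : ∀ y, γ * ‖y‖ ^ 2 ≤ ⟪A y, y⟫ ∧ ⟪A y, y⟫ ≤ Γ * ‖y‖ ^ 2)
    (lam : ℝ) (hlam : 0 < lam) (u : H) (hu : u ≠ 0) (heig : A u = lam • C u)
    (hmin : ∀ y, y ≠ 0 → lam ≤ ⟪A y, y⟫ / ⟪C y, y⟫)
    (x : H) (hx : ‖x‖ = 1) :
    ⟪A x, x⟫ / ⟪C x, x⟫ - lam ≤
      (2 * Γ / γ) * (⟪A x, x⟫ / ⟪C x, x⟫) * ‖x - (⟪x, u⟫ / ⟪u, u⟫) • u‖ ^ 2 :=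
  stmt6_general A C hAsymm hCsymm hCpos γ Γ hγ hA lam hlam u heig x hx
end

section
/- In the above setting, suppose ‖x‖ = 1, ‖(I − P)x‖ ≤ √a with a = γ/(4Γ) and hence λ(x) ≤ K := 2λ̲. Then ⟨C x, x⟩ ≥ γ/K. (I.e., C is uniformly coercive on any sufficiently small angular neighborhood of the eigendirection u among unit vectors.) -/
/-!
Since `A - λ̲ C` is symmetric and annihilates `u`, its quadratic form does not change when a
multiple of `u` is subtracted from `x`. Writing `w = (I - P)x`, this gives
`⟨Ax, x⟩ = λ̲ ⟨Cx, x⟩ + ⟨Aw, w⟩ - λ̲ ⟨Cw, w⟩ ≤ λ̲ ⟨Cx, x⟩ + Γ ‖w‖² ≤ λ̲ ⟨Cx, x⟩ + γ/4`,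
while `⟨Ax, x⟩ ≥ γ`; hence `λ̲ ⟨Cx, x⟩ ≥ 3γ/4 ≥ γ/2`.
-/

open scoped RealInnerProductSpace

namespace LinearMap.IsSymmetric

variable {H : Type*} [NormedAddCommGroup H] [InnerProductSpace ℝ H]

theorem inner_map_sub_smul_of_apply_eq_zero {T : H →ₗ[ℝ] H} (hT : T.IsSymmetric) {u : H}
    (hu : T u = 0) (x : H) (t : ℝ) : ⟪T (x - t • u), x - t • u⟫ = ⟪T x, x⟫ := by
  have hxu : ⟪T x, u⟫ = 0 := by rw [hT, hu, inner_zero_right]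
  rw [map_sub, map_smul, hu, smul_zero, sub_zero, inner_sub_right, real_inner_smul_right, hxu,
    mul_zero, sub_zero]

theorem inner_sub_mul_inner_sub_smul_of_eq_smul {A C : H →ₗ[ℝ] H} (hA : A.IsSymmetric)
    (hC : C.IsSymmetric) {lam : ℝ} {u : H} (heig : A u = lam • C u) (x : H) (t : ℝ) :
    ⟪A (x - t • u), x - t • u⟫ - lam * ⟪C (x - t • u), x - t • u⟫ =
      ⟪A x, x⟫ - lam * ⟪C x, x⟫ := by
  have hsymm : (A - lam • C).IsSymmetric := hA.sub (hC.smul (conj_trivial lam))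
  have hu : (A - lam • C) u = 0 := by simp [heig]
  simpa [inner_sub_left, inner_smul_left] using
    hsymm.inner_map_sub_smul_of_apply_eq_zero hu x t

end LinearMap.IsSymmetric

theorem mul_sq_le_of_le_sqrt_div {r γ Γ : ℝ} (hγ : 0 ≤ γ) (hΓ : 0 < Γ) (hr : 0 ≤ r)
    (h : r ≤ Real.sqrt (γ / (4 * Γ))) : Γ * r ^ 2 ≤ γ / 4 := by
  have hr2 : r ^ 2 ≤ γ / (4 * Γ) := by
    simpa [Real.sq_sqrt (by positivity : 0 ≤ γ / (4 * Γ))] using pow_le_pow_left₀ hr h 2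
  calc Γ * r ^ 2 ≤ Γ * (γ / (4 * Γ)) := by gcongr
    _ = γ / 4 := by field_simp

theorem stmt8_general {H : Type*} [NormedAddCommGroup H] [InnerProductSpace ℝ H]
    (A C : H →L[ℝ] H)
    (hAsymm : ∀ y z, ⟪A y, z⟫ = ⟪y, A z⟫) (hCsymm : ∀ y z, ⟪C y, z⟫ = ⟪y, C z⟫)
    (hCpos : ∀ y, y ≠ 0 → 0 < ⟪C y, y⟫)
    (γ Γ : ℝ) (hγ : 0 < γ)
    (hA : ∀ y, γ * ‖y‖ ^ 2 ≤ ⟪A y, y⟫ ∧ ⟪A y, y⟫ ≤ Γ * ‖y‖ ^ 2)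
    (lam : ℝ) (hlam : 0 < lam) (u : H) (heig : A u = lam • C u)
    (x : H) (hx : ‖x‖ = 1)
    (hδ : ‖x - (⟪x, u⟫ / ⟪u, u⟫) • u‖ ≤ Real.sqrt (γ / (4 * Γ))) :
    γ / (2 * lam) ≤ ⟪C x, x⟫ := by
  set w := x - (⟪x, u⟫ / ⟪u, u⟫) • u
  have hAx : γ ≤ ⟪A x, x⟫ ∧ ⟪A x, x⟫ ≤ Γ := by simpa [hx] using hA x
  have hw : Γ * ‖w‖ ^ 2 ≤ γ / 4 :=
    mul_sq_le_of_le_sqrt_div hγ.le (by linarith) (norm_nonneg w) hδ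
  have hCw : 0 ≤ ⟪C w, w⟫ := by
    rcases eq_or_ne w 0 with h | h
    · simp [h]
    · exact (hCpos w h).le
  have hdefect : ⟪A w, w⟫ - lam * ⟪C w, w⟫ = ⟪A x, x⟫ - lam * ⟪C x, x⟫ :=
    LinearMap.IsSymmetric.inner_sub_mul_inner_sub_smul_of_eq_smul (A := (A : H →ₗ[ℝ] H))
      (C := (C : H →ₗ[ℝ] H)) hAsymm hCsymm heig x _
  have hCx : 3 * γ / 4 ≤ lam * ⟪C x, x⟫ := by
    nlinarith [(hA w).2, mul_nonneg hlam.le hCw]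
  rw [div_le_iff₀ (by positivity)]
  linarith

/-- If `‖x‖ = 1` and `‖(I - P)x‖ ≤ √a` with `a = γ/(4Γ)` (so that
`λ(x) ≤ K := 2λ̲`), then `⟨C x, x⟩ ≥ γ/K`. -/
theorem stmt8 {H : Type*} [NormedAddCommGroup H] [InnerProductSpace ℝ H] [CompleteSpace H]
    (A C : H →L[ℝ] H)
    (hAsymm : ∀ y z, ⟪A y, z⟫ = ⟪y, A z⟫) (hCsymm : ∀ y z, ⟪C y, z⟫ = ⟪y, C z⟫)
    (hCpos : ∀ y, y ≠ 0 → 0 < ⟪C y, y⟫)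
    (γ Γ : ℝ) (hγ : 0 < γ)
    (hA : ∀ y, γ * ‖y‖ ^ 2 ≤ ⟪A y, y⟫ ∧ ⟪A y, y⟫ ≤ Γ * ‖y‖ ^ 2)
    (lam : ℝ) (hlam : 0 < lam) (u : H) (hu : u ≠ 0) (heig : A u = lam • C u)
    (hmin : ∀ y, y ≠ 0 → lam ≤ ⟪A y, y⟫ / ⟪C y, y⟫)
    (x : H) (hx : ‖x‖ = 1)
    (hδ : ‖x - (⟪x, u⟫ / ⟪u, u⟫) • u‖ ≤ Real.sqrt (γ / (4 * Γ))) :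
    γ / (2 * lam) ≤ ⟪C x, x⟫ :=
  stmt8_general A C hAsymm hCsymm hCpos γ Γ hγ hA lam hlam u heig x hx hδ
end

section
/- With r(x) := (A − λ(x) C)x, M := A − λ̲ C, u the eigenvector, δ⊥(x) := (I − P)(x − u) = (I − P)x, and K an upper bound on λ(x), one has the upper residual bound ‖r(x)‖ ≤ ‖M‖·‖δ⊥(x)‖ + (2KΓ C_C/γ)·‖δ⊥(x)‖², valid whenever ‖x‖ = 1 and λ(x) ≤ K, where C_C is a bound on ‖C‖. -/
open scoped RealInnerProductSpace

/-- Upper residual bound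
`‖r(x)‖ ≤ ‖M‖‖δ⊥(x)‖ + (2KΓ C_C/γ)‖δ⊥(x)‖²`, where `M = A - λ̲ C`,
`δ⊥(x) = (I - P)x` and `K ≥ λ(x)`, `C_C ≥ ‖C‖`. -/
theorem stmt10 {H : Type*} [NormedAddCommGroup H] [InnerProductSpace ℝ H] [CompleteSpace H]
    (A C : H →L[ℝ] H)
    (hAsymm : ∀ y z, ⟪A y, z⟫ = ⟪y, A z⟫) (hCsymm : ∀ y z, ⟪C y, z⟫ = ⟪y, C z⟫)
    (hCpos : ∀ y, y ≠ 0 → 0 < ⟪C y, y⟫)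
    (γ Γ : ℝ) (hγ : 0 < γ)
    (hA : ∀ y, γ * ‖y‖ ^ 2 ≤ ⟪A y, y⟫ ∧ ⟪A y, y⟫ ≤ Γ * ‖y‖ ^ 2)
    (lam : ℝ) (hlam : 0 < lam) (u : H) (hu : u ≠ 0) (heig : A u = lam • C u)
    (hmin : ∀ y, y ≠ 0 → lam ≤ ⟪A y, y⟫ / ⟪C y, y⟫)
    (CC : ℝ) (hCC : ‖C‖ ≤ CC)
    (x : H) (hx : ‖x‖ = 1)
    (K : ℝ) (hK : ⟪A x, x⟫ / ⟪C x, x⟫ ≤ K)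
    (hray : ⟪A x, x⟫ / ⟪C x, x⟫ - lam ≤
      (2 * Γ / γ) * (⟪A x, x⟫ / ⟪C x, x⟫) * ‖x - (⟪x, u⟫ / ⟪u, u⟫) • u‖ ^ 2) :
    ‖A x - (⟪A x, x⟫ / ⟪C x, x⟫) • C x‖ ≤
      ‖A - lam • C‖ * ‖x - (⟪x, u⟫ / ⟪u, u⟫) • u‖ +
        (2 * K * Γ * CC / γ) * ‖x - (⟪x, u⟫ / ⟪u, u⟫) • u‖ ^ 2 := by
  set α := ⟪x, u⟫ / ⟪u, u⟫ with hα
  set L := ⟪A x, x⟫ / ⟪C x, x⟫ with hL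
  set d := x - α • u with hd
  have hx0 : x ≠ 0 := by intro h; rw [h, norm_zero] at hx; norm_num at hx
  have hlamL : lam ≤ L := hmin x hx0
  have hMu : (A - lam • C) u = 0 := by
    simp [ContinuousLinearMap.sub_apply, ContinuousLinearMap.smul_apply, heig]
  have hMx : (A - lam • C) x = (A - lam • C) d := by
    have hxd : x = d + α • u := by rw [hd]; abel
    rw [hxd, map_add, map_smul, hMu, smul_zero, add_zero]
  have hr : A x - L • C x = (A - lam • C) d - (L - lam) • C x := by
    rw [← hMx]
    simp only [ContinuousLinearMap.sub_apply, ContinuousLinearMap.smul_apply, sub_smul]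
    abel
  have hCC0 : 0 ≤ CC := le_trans (norm_nonneg _) hCC
  have hu2 : 0 < ‖u‖ ^ 2 := by have := norm_pos_iff.mpr hu; positivity
  have hΓ : 0 < Γ := by nlinarith [(hA u).1, (hA u).2]
  have hCx : ‖C x‖ ≤ CC := by
    calc ‖C x‖ ≤ ‖C‖ * ‖x‖ := C.le_opNorm x
    _ = ‖C‖ := by rw [hx, mul_one]
    _ ≤ CC := hCC
  have hd2 : (0:ℝ) ≤ ‖d‖ ^ 2 := sq_nonneg _
  have step1 : ‖A x - L • C x‖ ≤ ‖A - lam • C‖ * ‖d‖ + (L - lam) * CC := by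
    calc ‖A x - L • C x‖ = ‖(A - lam • C) d - (L - lam) • C x‖ := by rw [hr]
    _ ≤ ‖(A - lam • C) d‖ + ‖(L - lam) • C x‖ := norm_sub_le _ _
    _ ≤ ‖A - lam • C‖ * ‖d‖ + (L - lam) * CC := by
        gcongr ?_ + ?_
        · exact (A - lam • C).le_opNorm d
        · rw [norm_smul, Real.norm_eq_abs, abs_of_nonneg (by linarith)]
          exact mul_le_mul_of_nonneg_left hCx (by linarith)
  have step2 : (L - lam) * CC ≤ (2 * K * Γ * CC / γ) * ‖d‖ ^ 2 := by
    have h1 : (L - lam) * CC ≤ ((2 * Γ / γ) * L * ‖d‖ ^ 2) * CC :=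
      mul_le_mul_of_nonneg_right hray hCC0
    have h2 : ((2 * Γ / γ) * L * ‖d‖ ^ 2) * CC ≤ (2 * K * Γ * CC / γ) * ‖d‖ ^ 2 := by
      have hLK : L ≤ K := hK
      have hnn : 0 ≤ (K - L) * (2 * Γ / γ * CC * ‖d‖ ^ 2) :=
        mul_nonneg (by linarith) (by positivity)
      have heq : (2 * K * Γ * CC / γ) * ‖d‖ ^ 2 - ((2 * Γ / γ) * L * ‖d‖ ^ 2) * CC
          = (K - L) * (2 * Γ / γ * CC * ‖d‖ ^ 2) := by ring
      linarith [heq ▸ hnn]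
    linarith
  linarith
end

section
/- Let u°, v, w be elements of a real Hilbert space with ‖u°‖ = ‖v‖ = 1, ‖u° − v‖ ≤ σ, ‖v − w‖ ≤ 3σ/2, ⟨w, v − w⟩ = 0, and 3σ/2 ≤ 1/2. Then ‖w‖ ≥ (1 − (3σ/2)²)^{1/2} > 0 and the normalized vector ū := w/‖w‖ satisfies ‖u° − ū‖ ≤ (√3 + 5/2)·σ. -/
open scoped RealInnerProductSpace

set_option maxHeartbeats 1000000 in
/-- Coarsening/renormalization estimate: if `‖u°‖ = ‖v‖ = 1`,
`‖u° - v‖ ≤ σ`, `‖v - w‖ ≤ 3σ/2`, `⟨w, v - w⟩ = 0` and `3σ/2 ≤ 1/2`, then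
`‖w‖ ≥ √(1 - (3σ/2)²) > 0` and `‖u° - w/‖w‖‖ ≤ (√3 + 5/2)σ`. -/
theorem stmt15 {H : Type*} [NormedAddCommGroup H] [InnerProductSpace ℝ H] [CompleteSpace H]
    (u₀ v w : H) (σ : ℝ)
    (hu : ‖u₀‖ = 1) (hv : ‖v‖ = 1) (huv : ‖u₀ - v‖ ≤ σ)
    (hvw : ‖v - w‖ ≤ 3 * σ / 2) (horth : ⟪w, v - w⟫ = 0) (hσ : 3 * σ / 2 ≤ 1 / 2) :
    Real.sqrt (1 - (3 * σ / 2) ^ 2) ≤ ‖w‖ ∧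
      0 < Real.sqrt (1 - (3 * σ / 2) ^ 2) ∧
      ‖u₀ - ‖w‖⁻¹ • w‖ ≤ (Real.sqrt 3 + 5 / 2) * σ := by
  have hσ0 : 0 ≤ σ := le_trans (norm_nonneg _) huv
  have ht0 : 0 ≤ ‖v - w‖ := norm_nonneg _
  set t := ‖v - w‖ with ht
  -- Pythagoras
  have hpyth : (1 : ℝ) = ‖w‖ ^ 2 + t ^ 2 := by
    have h := norm_add_sq_real w (v - w)
    rw [add_sub_cancel, hv, horth] at h
    simpa using h
  have hw2 : ‖w‖ ^ 2 = 1 - t ^ 2 := by linarith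
  have hwnorm : ‖w‖ = Real.sqrt (1 - t ^ 2) := by
    rw [← hw2, Real.sqrt_sq (norm_nonneg _)]
  have ht12 : t ≤ 1 / 2 := le_trans hvw hσ
  have h1t : (3:ℝ)/4 ≤ 1 - t ^ 2 := by nlinarith
  have hw1 : ‖w‖ ≤ 1 := by nlinarith [norm_nonneg w]
  have hwpos : 0 < ‖w‖ := by nlinarith [norm_nonneg w]
  refine ⟨?_, ?_, ?_⟩
  · rw [hwnorm]
    apply Real.sqrt_le_sqrt
    nlinarith
  · apply Real.sqrt_pos.2
    nlinarith
  · have hlast : ‖w - ‖w‖⁻¹ • w‖ = 1 - ‖w‖ := by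
      have h1 : w - ‖w‖⁻¹ • w = (1 - ‖w‖⁻¹) • w := by
        rw [sub_smul, one_smul]
      have hinv : 1 ≤ ‖w‖⁻¹ := by
        nlinarith [mul_inv_cancel₀ hwpos.ne', inv_nonneg.2 (norm_nonneg w)]
      rw [h1, norm_smul, Real.norm_eq_abs, abs_of_nonpos (by linarith)]
      have h2 : ‖w‖⁻¹ * ‖w‖ = 1 := inv_mul_cancel₀ hwpos.ne'
      ring_nf
      nlinarith [h2]
    have hle : 1 - ‖w‖ ≤ t ^ 2 := by nlinarith [norm_nonneg w]
    have htri : ‖u₀ - ‖w‖⁻¹ • w‖ ≤ ‖u₀ - v‖ + ‖v - w‖ + ‖w - ‖w‖⁻¹ • w‖ := by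
      calc ‖u₀ - ‖w‖⁻¹ • w‖ = ‖(u₀ - v) + ((v - w) + (w - ‖w‖⁻¹ • w))‖ := by
            congr 1; abel
        _ ≤ ‖u₀ - v‖ + ‖(v - w) + (w - ‖w‖⁻¹ • w)‖ := norm_add_le _ _
        _ ≤ ‖u₀ - v‖ + (‖v - w‖ + ‖w - ‖w‖⁻¹ • w‖) := by
            gcongr; exact norm_add_le _ _
        _ = _ := by ring
    have hsqrt3 : (1:ℝ) ≤ Real.sqrt 3 := by
      rw [show (1:ℝ) = Real.sqrt 1 from (Real.sqrt_one).symm]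
      exact Real.sqrt_le_sqrt (by norm_num)
    have ht2 : t ^ 2 ≤ 3 * σ / 4 := by nlinarith
    rw [hlast] at htri
    have h134 : (13:ℝ)/4 ≤ Real.sqrt 3 + 5/2 := by linarith
    have hfin := mul_le_mul_of_nonneg_right h134 hσ0
    linarith
end

section
/- Let s_A, s_C, s̃_A, s̃_C be positive reals with s_A ≤ Γ, s_C ≥ c_C > 0, |s_A − s̃_A| ≤ η c_C/2 and |s_C − s̃_C| ≤ c_C² η/(6Γ), where η ≤ min{γ/c_C, 3Γ/c_C}, and additionally s_A ≥ γ. Then s̃_A ≤ 3s_A/2 ≤ 3Γ/2, s̃_C ≥ s_C/2 ≥ c_C/2, and |s_A/s_C − s̃_A/s̃_C| ≤ η. -/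
/-!
Both approximations are within half of the exact value, which gives the first two bounds. For the
quotient, split `sA/sC - tA/tC` into the error of the numerator over `sC` and `tA` times the error
of `1/sC`; with `sC ≥ cC`, `tC ≥ cC/2` and `tA ≤ 3Γ/2`, the tolerances are chosen so that each
part contributes at most `η/2`.
-/

lemma half_le_and_le_three_halves_of_abs_sub_le {s t : ℝ} (h : |s - t| ≤ s / 2) :
    s / 2 ≤ t ∧ t ≤ 3 * s / 2 := by
  obtain ⟨h₁, h₂⟩ := abs_le.mp h
  constructor <;> linarith

lemma abs_div_sub_div_le {a b a' b' : ℝ} (hb : 0 < b) (hb' : 0 < b') :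
    |a / b - a' / b'| ≤ |a - a'| / b + |a'| * |b - b'| / (b * b') := by
  have hsplit : a / b - a' / b' = (a - a') / b + a' * (b' - b) / (b * b') := by
    field_simp
    ring
  calc |a / b - a' / b'| ≤ |(a - a') / b| + |a' * (b' - b) / (b * b')| :=
        hsplit ▸ abs_add_le _ _
    _ = |a - a'| / b + |a'| * |b - b'| / (b * b') := by
        rw [abs_div, abs_div, abs_mul, abs_sub_comm b', abs_of_pos hb, abs_of_pos (mul_pos hb hb')]

theorem stmt16_general (γ Γ cC η sA sC tA tC : ℝ)
    (hΓ : 0 < Γ) (hcC : 0 < cC)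
    (hsC : 0 < sC) (htA : 0 < tA) (htC : 0 < tC)
    (hsAγ : γ ≤ sA) (hsAΓ : sA ≤ Γ) (hsCc : cC ≤ sC)
    (hη : η ≤ min (γ / cC) (3 * Γ / cC)) (hη0 : 0 < η)
    (hApprox : |sA - tA| ≤ η * cC / 2) (hCapprox : |sC - tC| ≤ cC ^ 2 * η / (6 * Γ)) :
    (tA ≤ 3 * sA / 2 ∧ 3 * sA / 2 ≤ 3 * Γ / 2) ∧
      (sC / 2 ≤ tC ∧ cC / 2 ≤ sC / 2) ∧
      |sA / sC - tA / tC| ≤ η := by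
  obtain ⟨hηγ, hηΓ⟩ := le_min_iff.mp hη
  rw [le_div_iff₀ hcC] at hηγ hηΓ
  have hCtol : cC ^ 2 * η / (6 * Γ) ≤ cC / 2 := by
    rw [div_le_iff₀ (by positivity)]
    nlinarith
  obtain ⟨-, htA_le⟩ := half_le_and_le_three_halves_of_abs_sub_le (s := sA) (t := tA) (by linarith)
  obtain ⟨htC_ge, -⟩ := half_le_and_le_three_halves_of_abs_sub_le (s := sC) (t := tC) (by linarith)
  refine ⟨⟨htA_le, by linarith⟩, ⟨htC_ge, by linarith⟩, ?_⟩
  calc |sA / sC - tA / tC| ≤ |sA - tA| / sC + |tA| * |sC - tC| / (sC * tC) :=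
        abs_div_sub_div_le hsC htC
    _ ≤ η * cC / 2 / cC + 3 * Γ / 2 * (cC ^ 2 * η / (6 * Γ)) / (cC * (cC / 2)) := by
        rw [abs_of_pos htA]
        gcongr
        all_goals linarith
    _ = η := by
        field_simp
        ring

/-- Perturbation estimate for quotients underlying `RAYL`:
if `γ ≤ s_A ≤ Γ`, `s_C ≥ c_C > 0`, `|s_A - s̃_A| ≤ η c_C/2`, `|s_C - s̃_C| ≤ c_C²η/(6Γ)`
with `η ≤ min{γ/c_C, 3Γ/c_C}`, then `s̃_A ≤ 3s_A/2 ≤ 3Γ/2`, `s̃_C ≥ s_C/2 ≥ c_C/2`,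
and `|s_A/s_C - s̃_A/s̃_C| ≤ η`. -/
theorem stmt16 (γ Γ cC η sA sC tA tC : ℝ)
    (hγ : 0 < γ) (hΓ : 0 < Γ) (hcC : 0 < cC)
    (hsA : 0 < sA) (hsC : 0 < sC) (htA : 0 < tA) (htC : 0 < tC)
    (hsAγ : γ ≤ sA) (hsAΓ : sA ≤ Γ) (hsCc : cC ≤ sC)
    (hη : η ≤ min (γ / cC) (3 * Γ / cC)) (hη0 : 0 < η)
    (hApprox : |sA - tA| ≤ η * cC / 2) (hCapprox : |sC - tC| ≤ cC ^ 2 * η / (6 * Γ)) :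
    (tA ≤ 3 * sA / 2 ∧ 3 * sA / 2 ≤ 3 * Γ / 2) ∧
      (sC / 2 ≤ tC ∧ cC / 2 ≤ sC / 2) ∧
      |sA / sC - tA / tC| ≤ η :=
  stmt16_general γ Γ cC η sA sC tA tC hΓ hcC hsC htA htC hsAγ hsAΓ hsCc hη hη0 hApprox hCapprox
end
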